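/- Let λ̄ > 0 and let β̄ ∈ argmin_{β∈ℝᵖ} { ‖Y − Xβ‖₂ + λ̄‖β‖₁ } be the square-root lasso estimator, with ‖Xᵀε‖_∞ > 0 and λ̄ · ‖Y − Xβ̄‖₂ = ‖Xᵀε‖_∞. Then the residual norm satisfies the two-sided bounds ‖ε‖₂ − (2‖Xᵀε‖_∞‖β*‖₁)^{1/2} ≤ ‖Y − Xβ̄‖₂ ≤ ‖ε‖₂ + (2‖Xᵀε‖_∞‖β*‖₁)^{1/2}. -/
import Mathlib


open Matrix
open scoped BigOperators Classical

/-- Squared Euclidean norm of a vector. -/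
noncomputable def sqNorm {n : ℕ} (v : Fin n → ℝ) : ℝ := ∑ i, (v i) ^ 2

/-- Euclidean norm of a vector. -/
noncomputable def l2Norm {n : ℕ} (v : Fin n → ℝ) : ℝ := Real.sqrt (∑ i, (v i) ^ 2)

/-- ℓ₁ norm of a vector. -/
noncomputable def l1Norm {p : ℕ} (v : Fin p → ℝ) : ℝ := ∑ i, |v i|

/-- ℓ_∞ (supremum) norm of a vector. -/
noncomputable def linfNorm {p : ℕ} (v : Fin p → ℝ) : ℝ := ⨆ i, |v i|

lemma sqNorm_nonneg {n : ℕ} (v : Fin n → ℝ) : 0 ≤ sqNorm v :=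
  Finset.sum_nonneg fun _ _ => sq_nonneg _

lemma l2Norm_nonneg {n : ℕ} (v : Fin n → ℝ) : 0 ≤ l2Norm v := Real.sqrt_nonneg _

lemma sq_l2Norm {n : ℕ} (v : Fin n → ℝ) : l2Norm v ^ 2 = sqNorm v :=
  Real.sq_sqrt (sqNorm_nonneg v)

lemma l2Norm_add_le {n : ℕ} (u v : Fin n → ℝ) : l2Norm (u + v) ≤ l2Norm u + l2Norm v := by
  have hcs := Real.sum_mul_le_sqrt_mul_sqrt Finset.univ u v
  have h1 : sqNorm (u + v) ≤ (l2Norm u + l2Norm v) ^ 2 := by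
    have hexp : sqNorm (u + v) = sqNorm u + 2 * (∑ i, u i * v i) + sqNorm v := by
      unfold sqNorm
      rw [Finset.mul_sum, ← Finset.sum_add_distrib, ← Finset.sum_add_distrib]
      exact Finset.sum_congr rfl fun i _ => by simp [Pi.add_apply]; ring
    rw [hexp, add_sq, sq_l2Norm, sq_l2Norm]
    unfold l2Norm at *
    nlinarith
  calc l2Norm (u + v) = Real.sqrt (sqNorm (u + v)) := rfl
    _ ≤ Real.sqrt ((l2Norm u + l2Norm v) ^ 2) := Real.sqrt_le_sqrt h1
    _ = |l2Norm u + l2Norm v| := Real.sqrt_sq_eq_abs _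
    _ = l2Norm u + l2Norm v := abs_of_nonneg (add_nonneg (l2Norm_nonneg u) (l2Norm_nonneg v))

lemma l2Norm_smul {n : ℕ} (t : ℝ) (v : Fin n → ℝ) : l2Norm (t • v) = |t| * l2Norm v := by
  unfold l2Norm
  have : ∑ i, (t * v i) ^ 2 = t ^ 2 * ∑ i, v i ^ 2 := by
    rw [Finset.mul_sum]; exact Finset.sum_congr rfl fun i _ => by ring
  simp only [Pi.smul_apply, smul_eq_mul, this]
  rw [Real.sqrt_mul (sq_nonneg t), Real.sqrt_sq_eq_abs]

lemma abs_dot_le_linf_mul_l1 {p : ℕ} (a b : Fin p → ℝ) :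
    |∑ j, a j * b j| ≤ linfNorm a * l1Norm b := by
  calc |∑ j, a j * b j| ≤ ∑ j, |a j * b j| := Finset.abs_sum_le_sum_abs _ _
    _ ≤ ∑ j, linfNorm a * |b j| := by
        refine Finset.sum_le_sum fun j _ => ?_
        rw [abs_mul]
        have : |a j| ≤ linfNorm a := by
          have := le_ciSup (f := fun j => |a j|) (Set.Finite.bddAbove (Set.finite_range _)) j
          exact this
        exact mul_le_mul_of_nonneg_right this (abs_nonneg _)
    _ = linfNorm a * l1Norm b := by rw [l1Norm, Finset.mul_sum]


/-- Two-sided bound on the square-root lasso residual norm: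
`‖ε‖₂ − √(2‖Xᵀε‖_∞‖β*‖₁) ≤ ‖Y − Xβ̄‖₂ ≤ ‖ε‖₂ + √(2‖Xᵀε‖_∞‖β*‖₁)`. -/
theorem sqrt_lasso_residual_bounds
    {n p : ℕ}
    (Y ε : Fin n → ℝ) (X : Matrix (Fin n) (Fin p) ℝ) (βstar : Fin p → ℝ)
    (hmodel : Y = X.mulVec βstar + ε)
    (lamBar : ℝ) (hlam : 0 < lamBar)
    (βbar : Fin p → ℝ)
    (hβbar : ∀ β : Fin p → ℝ,
      l2Norm (Y - X.mulVec βbar) + lamBar * l1Norm βbar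
        ≤ l2Norm (Y - X.mulVec β) + lamBar * l1Norm β)
    (hεpos : 0 < linfNorm (Xᵀ.mulVec ε))
    (hfix : lamBar * l2Norm (Y - X.mulVec βbar) = linfNorm (Xᵀ.mulVec ε)) :
    l2Norm ε - Real.sqrt (2 * linfNorm (Xᵀ.mulVec ε) * l1Norm βstar)
        ≤ l2Norm (Y - X.mulVec βbar) ∧
      l2Norm (Y - X.mulVec βbar)
        ≤ l2Norm ε + Real.sqrt (2 * linfNorm (Xᵀ.mulVec ε) * l1Norm βstar) := by
  set u : Fin n → ℝ := Y - X.mulVec βbar with hu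
  set r : ℝ := l2Norm u with hr
  set μ : ℝ := linfNorm (Xᵀ.mulVec ε) with hμ
  set δ : Fin p → ℝ := βstar - βbar with hδ
  set w : Fin n → ℝ := X.mulVec δ with hw
  set Δ : ℝ := l1Norm βstar - l1Norm βbar with hΔ
  set C : ℝ := ∑ i, u i * w i with hC
  clear_value u r μ δ w Δ C
  have huw : u = ε + w := by
    rw [hu, hw, hδ, hmodel, Matrix.mulVec_sub]
    ext i; simp [Pi.add_apply, Pi.sub_apply]; ring
  have hr0 : 0 ≤ r := by rw [hr]; exact l2Norm_nonneg u
  -- Step A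
  have stepA : ∀ t : ℝ, 0 < t → t ≤ 1 →
      2 * C ≤ t * (sqNorm w + lamBar * |Δ| * l2Norm w) + 2 * μ * Δ := by
    intro t ht ht1
    set βt : Fin p → ℝ := βbar + t • δ with hβt
    have hres : Y - X.mulVec βt = u - t • w := by
      rw [hβt, hu, hw]
      ext i
      simp [Matrix.mulVec_add, Matrix.mulVec_smul, Pi.sub_apply, Pi.add_apply, Pi.smul_apply,
        smul_eq_mul]
      ring
    have hopt := hβbar βt
    rw [hres] at hopt
    set a : ℝ := l2Norm (u - t • w) with ha
    clear_value a
    have ha0 : 0 ≤ a := by rw [ha]; exact l2Norm_nonneg _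
    have hl1 : l1Norm βt ≤ (1 - t) * l1Norm βbar + t * l1Norm βstar := by
      rw [l1Norm, l1Norm, l1Norm, Finset.mul_sum, Finset.mul_sum, ← Finset.sum_add_distrib]
      refine Finset.sum_le_sum fun i _ => ?_
      have hβti : βt i = (1 - t) * βbar i + t * βstar i := by
        simp [hβt, hδ, Pi.add_apply, Pi.smul_apply, Pi.sub_apply, smul_eq_mul]; ring
      rw [hβti]
      calc |(1 - t) * βbar i + t * βstar i| ≤ |(1 - t) * βbar i| + |t * βstar i| := abs_add_le _ _
        _ = (1 - t) * |βbar i| + t * |βstar i| := by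
            rw [abs_mul, abs_mul, abs_of_nonneg (by linarith), abs_of_nonneg ht.le]
    have hra : r - a ≤ t * lamBar * Δ := by
      have h := mul_le_mul_of_nonneg_left hl1 hlam.le
      rw [hΔ]; linarith [hopt, h]
    have hsq : a ^ 2 = r ^ 2 - 2 * t * C + t ^ 2 * sqNorm w := by
      rw [ha, hr, sq_l2Norm, sq_l2Norm, hC, sqNorm, sqNorm, sqNorm, Finset.mul_sum,
        Finset.mul_sum, ← Finset.sum_sub_distrib, ← Finset.sum_add_distrib]
      exact Finset.sum_congr rfl fun i _ => by
        simp only [Pi.sub_apply, Pi.smul_apply, smul_eq_mul]; ring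
    have har : |a - r| ≤ t * l2Norm w := by
      have h1 : a ≤ r + t * l2Norm w := by
        have h := l2Norm_add_le u ((-t) • w)
        have he : u + (-t) • w = u - t • w := by ext i; simp; ring
        rw [he, l2Norm_smul, abs_neg, abs_of_nonneg ht.le] at h
        rw [ha, hr]; linarith
      have h2 : r ≤ a + t * l2Norm w := by
        have h := l2Norm_add_le (u - t • w) (t • w)
        have he : u - t • w + t • w = u := by ext i; simp
        rw [he, l2Norm_smul, abs_of_nonneg ht.le] at h
        rw [ha, hr]; linarith
      exact abs_le.2 ⟨by linarith, by linarith⟩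
    have hfix' : lamBar * r = μ := hfix
    -- combine
    have e1 : r ^ 2 - a ^ 2 ≤ t * lamBar * Δ * (r + a) := by
      have h := mul_le_mul_of_nonneg_right hra (add_nonneg hr0 ha0)
      linarith [h]
    have hΔar : Δ * (a - r) ≤ |Δ| * (t * l2Norm w) := by
      calc Δ * (a - r) ≤ |Δ * (a - r)| := le_abs_self _
        _ = |Δ| * |a - r| := abs_mul _ _
        _ ≤ |Δ| * (t * l2Norm w) := mul_le_mul_of_nonneg_left har (abs_nonneg _)
    have e2 : Δ * (r + a) ≤ 2 * Δ * r + |Δ| * (t * l2Norm w) := by linarith [hΔar]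
    have e3 : 2 * t * C ≤ t * (2 * μ * Δ) + t ^ 2 * (lamBar * |Δ| * l2Norm w) +
        t ^ 2 * sqNorm w := by
      have h' : (t * lamBar) * (Δ * (r + a)) ≤ (t * lamBar) * (2 * Δ * r + |Δ| * (t * l2Norm w)) :=
        mul_le_mul_of_nonneg_left e2 (mul_nonneg ht.le hlam.le)
      have hrew : (t * lamBar) * (2 * Δ * r) = t * (2 * μ * Δ) := by rw [← hfix']; ring
      linarith [hsq, e1, h', hrew]
    have := le_of_mul_le_mul_left
      (show t * (2 * C) ≤ t * (t * (sqNorm w + lamBar * |Δ| * l2Norm w) + 2 * μ * Δ) by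
        linarith [e3]) ht
    linarith
  -- Step B: let t → 0
  have hK : 0 ≤ sqNorm w + lamBar * |Δ| * l2Norm w :=
    add_nonneg (sqNorm_nonneg w)
      (mul_nonneg (mul_nonneg hlam.le (abs_nonneg _)) (l2Norm_nonneg w))
  have stepB : 2 * C ≤ 2 * μ * Δ := by
    apply le_of_forall_pos_le_add
    intro e he
    set K : ℝ := sqNorm w + lamBar * |Δ| * l2Norm w with hKdef
    have htpos : 0 < min 1 (e / (K + 1)) := lt_min one_pos (div_pos he (by linarith))
    have h := stepA _ htpos (min_le_left _ _)
    have hKle : min 1 (e / (K + 1)) * K ≤ e := by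
      have h1 : min 1 (e / (K + 1)) ≤ e / (K + 1) := min_le_right _ _
      have h2 : min 1 (e / (K + 1)) * K ≤ (e / (K + 1)) * K :=
        mul_le_mul_of_nonneg_right h1 hK
      have h3 : (e / (K + 1)) * K ≤ e := by
        rw [div_mul_eq_mul_div, div_le_iff₀ (by linarith : (0:ℝ) < K + 1)]
        nlinarith
      linarith
    linarith
  -- Step C: prediction bound
  have hdot : ∑ i, ε i * w i = ∑ j, (Xᵀ.mulVec ε) j * δ j := by
    simp only [hw, Matrix.mulVec, dotProduct, Matrix.transpose_apply, Finset.mul_sum,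
      Finset.sum_mul]
    rw [Finset.sum_comm]
    exact Finset.sum_congr rfl fun j _ => Finset.sum_congr rfl fun i _ => by ring
  have hC_eq : C = (∑ i, ε i * w i) + sqNorm w := by
    rw [hC, huw, sqNorm, ← Finset.sum_add_distrib]
    exact Finset.sum_congr rfl fun i _ => by simp [Pi.add_apply]; ring
  have habs : |∑ j, (Xᵀ.mulVec ε) j * δ j| ≤ μ * l1Norm δ := by
    rw [hμ]; exact abs_dot_le_linf_mul_l1 _ _
  have hl1δ : l1Norm δ ≤ l1Norm βstar + l1Norm βbar := by
    rw [l1Norm, l1Norm, l1Norm, ← Finset.sum_add_distrib]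
    refine Finset.sum_le_sum fun i _ => ?_
    have : δ i = βstar i - βbar i := by rw [hδ]; rfl
    rw [this]
    simpa [sub_eq_add_neg] using abs_add_le (βstar i) (-(βbar i))
  have hμnn : 0 ≤ μ := hεpos.le
  have hpred : sqNorm w ≤ 2 * μ * l1Norm βstar := by
    have h1 : -(μ * l1Norm δ) ≤ ∑ j, (Xᵀ.mulVec ε) j * δ j := (abs_le.mp habs).1
    have h2 : μ * l1Norm δ ≤ μ * (l1Norm βstar + l1Norm βbar) :=
      mul_le_mul_of_nonneg_left hl1δ hμnn
    rw [hΔ] at stepB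
    linarith [hC_eq, hdot, h1, h2, stepB]
  -- Final step
  have hl2w : l2Norm w ≤ Real.sqrt (2 * μ * l1Norm βstar) := by
    have : l2Norm w = Real.sqrt (sqNorm w) := rfl
    rw [this]
    exact Real.sqrt_le_sqrt hpred
  have hup : r ≤ l2Norm ε + Real.sqrt (2 * μ * l1Norm βstar) := by
    have h := l2Norm_add_le ε w
    rw [← huw] at h
    rw [hr]; linarith
  have hlo : l2Norm ε ≤ r + Real.sqrt (2 * μ * l1Norm βstar) := by
    have h := l2Norm_add_le u ((-1 : ℝ) • w)
    have he : u + (-1 : ℝ) • w = ε := by rw [huw]; ext i; simp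
    rw [he, l2Norm_smul] at h
    simp only [abs_neg, abs_one, one_mul] at h
    rw [← hr] at h; linarith
  exact ⟨by linarith, by linarith⟩
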